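/- Let a, σ² ≥ 0, χ > 0, K > 0, λ₀ ∈ (0,1], and let N : (0,∞) → [0,∞) and D : (0,∞) → ℝ be functions such that: (i) for every λ > 0, ∫₀^∞ e^{−λt} · t · D(t) dt = λ^{−2}( a + 2χ N(λ) ) (the integral being finite); (ii) ∫₀^∞ e^{−λt} · t · D(t) dt ≤ K λ^{−7/3} for all λ ∈ (0, λ₀]; and (iii) D(t) ≤ σ² + 12 χ N(1/t) for all t ≥ 1. Then there exists a constant C < ∞ such that D(t) ≤ C t^{1/3} for all t ≥ 1. -/

import Mathlib

open MeasureTheory Real Set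

/-!
Write `F(λ) = ∫₀^∞ e^{-λt} t D(t) dt`, so that `λ² F(λ) = a + 2χ N(λ)`. For small `λ` the
Tauberian bound gives `λ² F(λ) ≤ K λ^{-1/3}`, while for `λ₀ < λ ≤ 1` the kernel `e^{-λt}` is
dominated by `e^{-λ₀t}`, so `F(λ)` is bounded by the `L¹` norm of the integrand at `λ₀`.
Hence `2χ N(1/t) ≤ λ² F(λ) ≤ C t^{1/3}` at `λ = 1/t`, and (iii) turns this into the bound on `D`.
-/

lemma exp_mul_mul_le_abs_exp_mul_mul {μ lam s d : ℝ} (hμ : μ ≤ lam) (hs : 0 < s) :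
    exp (-lam * s) * s * d ≤ |exp (-μ * s) * s * d| := by
  have hexp : exp (-lam * s) ≤ exp (-μ * s) := exp_le_exp.mpr (by nlinarith)
  calc exp (-lam * s) * s * d
      ≤ exp (-lam * s) * s * |d| := by gcongr; exact le_abs_self d
    _ ≤ exp (-μ * s) * s * |d| := by gcongr
    _ = |exp (-μ * s) * s * d| := by
        rw [abs_mul, abs_mul, abs_of_pos (exp_pos _), abs_of_pos hs]

lemma setIntegral_exp_mul_mul_le_integral_norm {D : ℝ → ℝ} {μ lam : ℝ}
    (hμint : Integrable (fun t => exp (-μ * t) * t * D t) (volume.restrict (Ioi 0)))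
    (hint : Integrable (fun t => exp (-lam * t) * t * D t) (volume.restrict (Ioi 0)))
    (hμ : μ ≤ lam) :
    ∫ t in Ioi (0:ℝ), exp (-lam * t) * t * D t ≤
      ∫ t in Ioi (0:ℝ), ‖exp (-μ * t) * t * D t‖ :=
  setIntegral_mono_on hint hμint.norm measurableSet_Ioi fun _ hs =>
    exp_mul_mul_le_abs_exp_mul_mul hμ hs

lemma sq_mul_le_mul_rpow_of_le_rpow_of_le {F : ℝ → ℝ} {K M lam₀ : ℝ} (hM : 0 ≤ M)
    (hsmall : ∀ lam ∈ Ioc (0:ℝ) lam₀, F lam ≤ K * lam ^ (-(7:ℝ)/3))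
    (hlarge : ∀ lam ∈ Ioc lam₀ 1, F lam ≤ M) :
    ∀ lam ∈ Ioc (0:ℝ) 1, lam ^ 2 * F lam ≤ max K M * lam ^ (-(1:ℝ)/3) := by
  intro lam ⟨hpos, hle⟩
  have hrpow : 1 ≤ lam ^ (-(1:ℝ)/3) :=
    one_le_rpow_of_pos_of_le_one_of_nonpos hpos hle (by norm_num)
  rcases le_or_gt lam lam₀ with hsm | hlg
  · have hexp : lam ^ 2 * lam ^ (-(7:ℝ)/3) = lam ^ (-(1:ℝ)/3) := by
      rw [← rpow_natCast, ← rpow_add hpos]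
      norm_num
    calc lam ^ 2 * F lam ≤ lam ^ 2 * (K * lam ^ (-(7:ℝ)/3)) := by
          gcongr; exact hsmall lam ⟨hpos, hsm⟩
      _ = K * lam ^ (-(1:ℝ)/3) := by rw [← hexp]; ring
      _ ≤ max K M * lam ^ (-(1:ℝ)/3) := by gcongr; exact le_max_left K M
  · have hsq : lam ^ 2 ≤ 1 := pow_le_one₀ hpos.le hle
    calc lam ^ 2 * F lam ≤ lam ^ 2 * M := by gcongr; exact hlarge lam ⟨hlg, hle⟩
      _ ≤ max K M := (mul_le_of_le_one_left hM hsq).trans (le_max_right K M)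
      _ ≤ max K M * lam ^ (-(1:ℝ)/3) :=
          le_mul_of_one_le_right (hM.trans (le_max_right K M)) hrpow

theorem stmt9_general (a σsq χ K lam₀ : ℝ) (ha : 0 ≤ a) (hσ : 0 ≤ σsq)
    (hlam₀ : lam₀ ∈ Ioc (0:ℝ) 1)
    (N D : ℝ → ℝ)
    (hint : ∀ lam, 0 < lam →
      Integrable (fun t => exp (-lam * t) * t * D t) (volume.restrict (Ioi 0)))
    (h1 : ∀ lam, 0 < lam →
      ∫ t in Ioi (0:ℝ), exp (-lam * t) * t * D t = lam⁻¹ ^ 2 * (a + 2 * χ * N lam))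
    (h2 : ∀ lam ∈ Ioc (0:ℝ) lam₀,
      ∫ t in Ioi (0:ℝ), exp (-lam * t) * t * D t ≤ K * lam ^ (-(7:ℝ)/3))
    (h3 : ∀ t, 1 ≤ t → D t ≤ σsq + 12 * χ * N t⁻¹) :
    ∃ C : ℝ, ∀ t, 1 ≤ t → D t ≤ C * t ^ ((1:ℝ)/3) := by
  set M := ∫ t in Ioi (0:ℝ), ‖exp (-lam₀ * t) * t * D t‖
  have hbound := sq_mul_le_mul_rpow_of_le_rpow_of_le (integral_nonneg fun _ => norm_nonneg _)
    h2 fun lam hlam => setIntegral_exp_mul_mul_le_integral_norm (hint lam₀ hlam₀.1)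
      (hint lam (hlam₀.1.trans hlam.1)) hlam.1.le
  refine ⟨σsq + 6 * max K M, fun t ht => ?_⟩
  have ht0 : 0 < t := one_pos.trans_le ht
  have hN : a + 2 * χ * N t⁻¹ ≤ max K M * t ^ ((1:ℝ)/3) := by
    have h := hbound t⁻¹ ⟨inv_pos.mpr ht0, inv_le_one_of_one_le₀ ht⟩
    rwa [h1 _ (inv_pos.mpr ht0), ← mul_assoc, ← mul_pow, mul_inv_cancel₀ (inv_ne_zero ht0.ne'),
      one_pow, one_mul, inv_rpow ht0.le, ← rpow_neg ht0.le, neg_div, neg_neg] at h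
  have hσt : σsq ≤ σsq * t ^ ((1:ℝ)/3) := le_mul_of_one_le_right hσ (one_le_rpow ht (by norm_num))
  linarith [h3 t ht]

/-- Proof skeleton of Theorem 5: from the Laplace-transformed Green–Kubo identity (i),
the Tauberian upper bound (ii), and the Lemma 1 bound (iii), the pointwise diffusivity
bound `D(t) ≤ C t^{1/3}` for `t ≥ 1` follows. -/
theorem stmt9 (a σsq χ K lam₀ : ℝ) (ha : 0 ≤ a) (hσ : 0 ≤ σsq) (hχ : 0 < χ) (hK : 0 < K)
    (hlam₀ : lam₀ ∈ Ioc (0:ℝ) 1)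
    (N D : ℝ → ℝ) (hN : ∀ lam, 0 < lam → 0 ≤ N lam)
    (hint : ∀ lam, 0 < lam →
      Integrable (fun t => exp (-lam * t) * t * D t) (volume.restrict (Ioi 0)))
    (h1 : ∀ lam, 0 < lam →
      ∫ t in Ioi (0:ℝ), exp (-lam * t) * t * D t = lam⁻¹ ^ 2 * (a + 2 * χ * N lam))
    (h2 : ∀ lam ∈ Ioc (0:ℝ) lam₀,
      ∫ t in Ioi (0:ℝ), exp (-lam * t) * t * D t ≤ K * lam ^ (-(7:ℝ)/3))
    (h3 : ∀ t, 1 ≤ t → D t ≤ σsq + 12 * χ * N t⁻¹) :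
    ∃ C : ℝ, ∀ t, 1 ≤ t → D t ≤ C * t ^ ((1:ℝ)/3) :=
  stmt9_general a σsq χ K lam₀ ha hσ hlam₀ N D hint h1 h2 h3
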